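/- arXiv:2410.09271 — 7 statements merged into one kernel-verified Lean document; each statement's English description precedes it below -/
import Mathlib

section
/- Let S be an additively cancellative hemiring (i.e., a + c = a + d implies c = d). Let I, J be ideals and let [I,J] denote the ideal IJ + JI. For all a, b, c, d ∈ S with a ρ_I b and c ρ_J d: if a + c ρ_{[I,J]} a + d, then b + c ρ_{[I,J]} b + d. -/
/-- The product of two ideals: all finite sums of products `f i * g i`. -/
def idealProd {S : Type*} [NonUnitalSemiring S] (A B : Set S) : Set S :=
  {x | ∃ t : ℕ, ∃ f g : Fin (t + 1) → S,
    (∀ i, f i ∈ A) ∧ (∀ i, g i ∈ B) ∧ x = ∑ i, f i * g i}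

/-- `[I,J] = IJ + JI`. -/
def bracketSet {S : Type*} [NonUnitalSemiring S] (I J : Set S) : Set S :=
  {x | ∃ u ∈ idealProd I J, ∃ v ∈ idealProd J I, x = u + v}

/-- In an additively cancellative hemiring, if `a ρ_I b`, `c ρ_J d`
and `a + c ρ_{[I,J]} a + d`, then `b + c ρ_{[I,J]} b + d`. -/
theorem term_condition_step {S : Type*} [NonUnitalSemiring S]
    (hcanc : ∀ a c d : S, a + c = a + d → c = d)
    (I J : Set S)
    (hneI : I.Nonempty) (hneJ : J.Nonempty)
    (haddI : ∀ a ∈ I, ∀ b ∈ I, a + b ∈ I)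
    (hmulIl : ∀ a ∈ I, ∀ s : S, s * a ∈ I)
    (hmulIr : ∀ a ∈ I, ∀ s : S, a * s ∈ I)
    (haddJ : ∀ a ∈ J, ∀ b ∈ J, a + b ∈ J)
    (hmulJl : ∀ a ∈ J, ∀ s : S, s * a ∈ J)
    (hmulJr : ∀ a ∈ J, ∀ s : S, a * s ∈ J)
    (a b c d : S)
    (hab : ∃ i ∈ I, ∃ j ∈ I, a + i = b + j)
    (hcd : ∃ i ∈ J, ∃ j ∈ J, c + i = d + j)
    (h : ∃ i ∈ bracketSet I J, ∃ j ∈ bracketSet I J, (a + c) + i = (a + d) + j) :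
    ∃ i ∈ bracketSet I J, ∃ j ∈ bracketSet I J, (b + c) + i = (b + d) + j := by
  obtain ⟨i, hi, j, hj, hij⟩ := hab
  obtain ⟨u, hu, v, hv, huv⟩ := h
  refine ⟨u, hu, v, hv, hcanc j _ _ ?_⟩
  calc j + ((b + c) + u) = (b + j) + (c + u) := by abel
    _ = (a + i) + (c + u) := by rw [hij]
    _ = i + ((a + c) + u) := by abel
    _ = i + ((a + d) + v) := by rw [huv]
    _ = (a + i) + (d + v) := by abel
    _ = (b + j) + (d + v) := by rw [hij]
    _ = j + ((b + d) + v) := by abel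
end

section
/- Let S be an additively cancellative hemiring with S^{n+1} = {o} for some n ≥ 1 (every product of n+1 elements is o). Then for every polynomial function p of S in variables x₁,…,xₙ,y (built from +, ·, variables, and constants) and all tuples a₁,…,aₙ,b₁,…,bₙ,c,d: if p(v(x₁),…,v(xₙ),c) = p(v(x₁),…,v(xₙ),d) for every valuation v assigning each xᵢ either aᵢ or bᵢ, except possibly the valuation assigning all bᵢ, then p(b₁,…,bₙ,c) = p(b₁,…,bₙ,d). -/
/-- Product of the `n+1` elements `f 0 * f 1 * ⋯ * f n` (no unit needed). -/
def finProd {S : Type*} [Mul S] : {n : ℕ} → (Fin (n + 1) → S) → S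
  | 0, f => f 0
  | _ + 1, f => f 0 * finProd (fun i => f i.succ)

/-- Polynomial functions of a hemiring: generated from projections and constants
by pointwise `+` and `*`. -/
inductive IsPolyFn (S : Type*) [Add S] [Mul S] (ι : Type*) : ((ι → S) → S) → Prop
  | proj (i : ι) : IsPolyFn S ι (fun x => x i)
  | const (c : S) : IsPolyFn S ι (fun _ => c)
  | add {p q} : IsPolyFn S ι p → IsPolyFn S ι q → IsPolyFn S ι (fun x => p x + q x)
  | mul {p q} : IsPolyFn S ι p → IsPolyFn S ι q → IsPolyFn S ι (fun x => p x * q x)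


/-!
Put the two candidate values of each block of variables at the vertices of the cube
`(ZMod 2)^(n+1)`, the last coordinate choosing between `c` and `d`. After expanding `p` into
monomials, a monomial with at most `n` factors ignores some coordinate, so flipping that coordinate
matches its values at even and at odd vertices; a monomial with more factors vanishes. Hence the sum
of `p` over the even vertices equals its sum over the odd ones. Pairing the vertices that differ
only in the last coordinate, the hypothesis identifies the two sides term by term, except for the
pair of all-`b` vertices, and additive cancellation then forces the remaining pair to agree.
-/

theorem finProd_cons {S : Type*} [Mul S] {r : ℕ} (a : S) (f : Fin (r + 1) → S) :
    finProd (Fin.cons a f : Fin (r + 2) → S) = a * finProd f :=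
  rfl

theorem mul_mem_range_finProd {S : Type*} [Semigroup S] {r s : ℕ} {x y : S}
    (hx : x ∈ Set.range (finProd (n := r))) (hy : y ∈ Set.range (finProd (n := s))) :
    x * y ∈ Set.range (finProd (n := s + r + 1)) := by
  induction r generalizing x with
  | zero =>
    obtain ⟨f, rfl⟩ := hx
    obtain ⟨g, rfl⟩ := hy
    exact ⟨Fin.cons (f 0) g, finProd_cons _ _⟩
  | succ r ih =>
    obtain ⟨f, rfl⟩ := hx
    obtain ⟨g, hg⟩ := ih (x := finProd fun i => f i.succ) ⟨_, rfl⟩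
    exact ⟨Fin.cons (f 0) g, by rw [finProd_cons, hg, finProd, mul_assoc]⟩

theorem finProd_eq_zero_of_le {S : Type*} [MulZeroClass S] {n r : ℕ}
    (hpow : ∀ f : Fin (n + 1) → S, finProd f = 0) (h : n ≤ r) (f : Fin (r + 1) → S) :
    finProd f = 0 := by
  induction r, h using Nat.le_induction with
  | base => exact hpow f
  | succ r _ ih => rw [finProd, ih, mul_zero]

theorem DependsOn.mul {ι M : Type*} {α : ι → Type*} [Mul M] {f g : (Π i, α i) → M}
    {s t : Set ι} (hf : DependsOn f s) (hg : DependsOn g t) : DependsOn (f * g) (s ∪ t) :=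
  fun _ _ h ↦ congrArg₂ (· * ·) (hf fun i hi ↦ h i (.inl hi)) (hg fun i hi ↦ h i (.inr hi))

theorem eq_of_sum_eq_sum_of_forall_ne {ι M : Type*} [AddCommMonoid M] [IsLeftCancelAdd M]
    [DecidableEq ι] {s : Finset ι} {f g : ι → M} {a : ι} (ha : a ∈ s)
    (hsum : ∑ i ∈ s, f i = ∑ i ∈ s, g i) (h : ∀ i ∈ s, i ≠ a → f i = g i) : f a = g a := by
  rw [← Finset.sum_erase_add s f ha, ← Finset.sum_erase_add s g ha,
    Finset.sum_congr rfl fun i hi ↦ h i (Finset.mem_of_mem_erase hi) (Finset.ne_of_mem_erase hi)]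
    at hsum
  exact add_left_cancel hsum

section Cube

variable {σ S : Type*} [DecidableEq σ]

theorem add_single_one_add_single_one (t : σ → ZMod 2) (j : σ) :
    t + Pi.single j 1 + Pi.single j 1 = t := by
  rw [add_assoc, ← Pi.single_add, CharTwo.add_self_eq_zero, Pi.single_zero, add_zero]

variable [Fintype σ]

theorem sum_add_single_one (t : σ → ZMod 2) (j : σ) :
    ∑ i, (t + Pi.single j 1 : σ → ZMod 2) i = ∑ i, t i + 1 := by
  simp [Finset.sum_add_distrib]

variable [AddCommMonoid S]

def IsParityBalanced (F : (σ → ZMod 2) → S) : Prop :=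
  ∀ ε : ZMod 2, ∑ t with ∑ i, t i = ε, F t = ∑ t with ∑ i, t i = ε + 1, F t

theorem sum_parity_add_one_eq (F : (σ → ZMod 2) → S) (j : σ) (ε : ZMod 2) :
    ∑ t : σ → ZMod 2 with ∑ i, t i = ε + 1, F t =
      ∑ t : σ → ZMod 2 with ∑ i, t i = ε, F (t + Pi.single j 1) :=
  (Finset.sum_equiv (Equiv.addRight (Pi.single j 1 : σ → ZMod 2)) (fun t ↦ by
    simp only [Finset.mem_filter, Finset.mem_univ, true_and, Equiv.coe_addRight,
      sum_add_single_one, add_left_inj])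
    fun _ _ ↦ rfl).symm

theorem isParityBalanced_of_forall_add_single {F : (σ → ZMod 2) → S} (j : σ)
    (h : ∀ t, F (t + Pi.single j 1) = F t) : IsParityBalanced F := fun ε ↦ by
  simp only [sum_parity_add_one_eq F j, h]

theorem DependsOn.isParityBalanced {F : (σ → ZMod 2) → S} {U : Set σ} (hF : DependsOn F U)
    {j : σ} (hj : j ∉ U) : IsParityBalanced F :=
  isParityBalanced_of_forall_add_single j fun t ↦ hF fun i hi ↦ by
    simp [ne_of_mem_of_not_mem hi hj]

variable (σ S) in
def parityBalancedAddSubmonoid : AddSubmonoid ((σ → ZMod 2) → S) where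
  carrier := {F | IsParityBalanced F}
  zero_mem' _ := by simp
  add_mem' hF hG ε := by simp only [Pi.add_apply, Finset.sum_add_distrib, hF ε, hG ε]

theorem IsParityBalanced.eq_add_single [IsLeftCancelAdd S] {F : (σ → ZMod 2) → S}
    (hF : IsParityBalanced F) {j : σ} {t₀ : σ → ZMod 2}
    (h : ∀ t, t j = t₀ j → t ≠ t₀ → F t = F (t + Pi.single j 1)) :
    F t₀ = F (t₀ + Pi.single j 1) := by
  have hsum := hF (∑ i, t₀ i)
  rw [sum_parity_add_one_eq F j] at hsum
  refine eq_of_sum_eq_sum_of_forall_ne (by simp) hsum fun t ht hne ↦ ?_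
  by_cases htj : t j = t₀ j
  · exact h t htj hne
  -- otherwise `t` is the partner of a vertex `t + e_j` to which `h` applies
  have hpartner : (t + Pi.single j 1 : σ → ZMod 2) j = t₀ j := by
    rw [Pi.add_apply, Pi.single_eq_same]
    exact (by decide : ∀ x y : ZMod 2, x ≠ y → x + 1 = y) _ _ htj
  have hne' : t + Pi.single j 1 ≠ t₀ := fun he ↦ by
    have hpar := congrArg (fun s : σ → ZMod 2 ↦ ∑ i, s i) he
    simp only [sum_add_single_one, (Finset.mem_filter.1 ht).2, add_eq_left] at hpar
    exact one_ne_zero hpar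
  rw [h _ hpartner hne', add_single_one_add_single_one]

end Cube

section Monomials

variable {σ S : Type*} [DecidableEq σ] [NonUnitalSemiring S]

variable (σ S) in
def cubeMonomials : Subsemigroup ((σ → ZMod 2) → S) where
  carrier := {F | ∃ (r : ℕ) (U : Finset σ), U.card ≤ r + 1 ∧ DependsOn F U ∧
    ∀ t, F t ∈ Set.range (finProd (n := r))}
  mul_mem' := by
    rintro F G ⟨r, U, hUr, hFU, hFr⟩ ⟨s, V, hVs, hGV, hGs⟩
    refine ⟨s + r + 1, U ∪ V, ?_, by simpa using hFU.mul hGV,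
      fun t ↦ mul_mem_range_finProd (hFr t) (hGs t)⟩
    have := Finset.card_union_le U V
    omega

theorem mem_cubeMonomials_of_dependsOn {F : (σ → ZMod 2) → S} {U : Finset σ} (hU : U.card ≤ 1)
    (hF : DependsOn F U) : F ∈ cubeMonomials σ S :=
  ⟨0, U, hU, hF, fun t ↦ ⟨fun _ ↦ F t, rfl⟩⟩

variable [Fintype σ]

theorem isParityBalanced_of_mem_cubeMonomials {n : ℕ}
    (hpow : ∀ f : Fin (n + 1) → S, finProd f = 0) (hσ : n < Fintype.card σ)
    {F : (σ → ZMod 2) → S} (hF : F ∈ cubeMonomials σ S) : IsParityBalanced F := by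
  obtain ⟨r, U, hUr, hFU, hFr⟩ := hF
  by_cases hU : ∃ j, j ∉ U
  · obtain ⟨j, hj⟩ := hU
    exact hFU.isParityBalanced (Finset.mem_coe.not.2 hj)
  have hnr : n ≤ r := by
    rw [Finset.eq_univ_iff_forall.2 (not_exists_not.1 hU), Finset.card_univ] at hUr
    omega
  have hF0 : F = 0 := funext fun t ↦ by
    obtain ⟨f, hf⟩ := hFr t
    rw [← hf, finProd_eq_zero_of_le hpow hnr f, Pi.zero_apply]
  exact hF0 ▸ (parityBalancedAddSubmonoid σ S).zero_mem

theorem isParityBalanced_of_isPolyFn {ι : Type*} {n : ℕ}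
    (hpow : ∀ f : Fin (n + 1) → S, finProd f = 0) (hσ : n < Fintype.card σ)
    {p : (ι → S) → S} (hp : IsPolyFn S ι p) (X : ι → (σ → ZMod 2) → S)
    (hX : ∀ i, ∃ j, DependsOn (X i) {j}) : IsParityBalanced fun t ↦ p fun i ↦ X i t := by
  let M := (cubeMonomials σ S).nonUnitalSubsemiringClosure
  have hM : M.toAddSubmonoid ≤ parityBalancedAddSubmonoid σ S := by
    rw [Subsemigroup.nonUnitalSubsemiringClosure_toAddSubmonoid, AddSubmonoid.closure_le]
    exact fun F ↦ isParityBalanced_of_mem_cubeMonomials hpow hσ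
  apply hM
  induction hp with
  | proj i =>
    obtain ⟨j, hj⟩ := hX i
    exact AddSubmonoid.subset_closure
      (mem_cubeMonomials_of_dependsOn (U := {j}) (by simp) (by simpa using hj))
  | const c =>
    exact AddSubmonoid.subset_closure
      (mem_cubeMonomials_of_dependsOn (U := ∅) (by simp) (by simpa using dependsOn_const c))
  | add _ _ ihp ihq => exact M.add_mem ihp ihq
  | mul _ _ ihp ihq => exact M.mul_mem ihp ihq

end Monomials

theorem supernilpotent_of_cancellative_nilpotent_general {S : Type*} [NonUnitalSemiring S]
    (n : ℕ)
    (hcanc : ∀ a c d : S, a + c = a + d → c = d)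
    (hpow : ∀ f : Fin (n + 1) → S, finProd f = 0)
    (k : Fin n → ℕ) (m : ℕ)
    (p : (((Σ i : Fin n, Fin (k i)) ⊕ Fin m) → S) → S)
    (hp : IsPolyFn S ((Σ i : Fin n, Fin (k i)) ⊕ Fin m) p)
    (a b : ∀ i : Fin n, Fin (k i) → S) (c d : Fin m → S)
    (hyp : ∀ v : Fin n → Bool, v ≠ (fun _ => true) →
      p (Sum.elim (fun z => if v z.1 then b z.1 z.2 else a z.1 z.2) c) =
        p (Sum.elim (fun z => if v z.1 then b z.1 z.2 else a z.1 z.2) d)) :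
    p (Sum.elim (fun z => b z.1 z.2) c) = p (Sum.elim (fun z => b z.1 z.2) d) := by
  have : IsLeftCancelAdd S := ⟨hcanc⟩
  -- vertex `t` of the cube selects `b` or `a` in block `some i`, and `c` or `d` at `none`
  let sel (t : Option (Fin n) → ZMod 2) : (Σ i : Fin n, Fin (k i)) ⊕ Fin m → S :=
    Sum.elim (fun z ↦ if t (some z.1) = 1 then b z.1 z.2 else a z.1 z.2)
      (if t none = 1 then c else d)
  have hsel : ∀ i, ∃ j, DependsOn (fun t ↦ sel t i) {j} := by
    rintro (z | l)
    · exact ⟨some z.1, fun x y h ↦ by simp [sel, h (some z.1) rfl]⟩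
    · exact ⟨none, fun x y h ↦ by simp [sel, h none rfl]⟩
  have hbal : IsParityBalanced fun t ↦ p (sel t) :=
    isParityBalanced_of_isPolyFn hpow (by simp) hp _ hsel
  have key := hbal.eq_add_single (j := none) (t₀ := fun _ ↦ 1) fun t ht hne ↦ by
    have hv : (fun i ↦ decide (t (some i) = 1)) ≠ fun _ ↦ true := fun hv ↦ hne <| by
      funext o
      cases o with
      | none => exact ht
      | some i => simpa using congrFun hv i
    convert hyp _ hv using 2 <;> funext z <;> cases z <;> simp [sel, ht]
  convert key using 2 <;> funext z <;> cases z <;> simp [sel]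

/-- An additively cancellative hemiring with `S^{n+1} = {0}` (`n ≥ 1`)
satisfies the `(n+1)`-ary term condition `C(1,…,1;0)` (is `n`-supernilpotent). -/
theorem supernilpotent_of_cancellative_nilpotent {S : Type*} [NonUnitalSemiring S]
    (n : ℕ) (hn : 1 ≤ n)
    (hcanc : ∀ a c d : S, a + c = a + d → c = d)
    (hpow : ∀ f : Fin (n + 1) → S, finProd f = 0)
    (k : Fin n → ℕ) (m : ℕ)
    (p : (((Σ i : Fin n, Fin (k i)) ⊕ Fin m) → S) → S)
    (hp : IsPolyFn S ((Σ i : Fin n, Fin (k i)) ⊕ Fin m) p)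
    (a b : ∀ i : Fin n, Fin (k i) → S) (c d : Fin m → S)
    (hyp : ∀ v : Fin n → Bool, v ≠ (fun _ => true) →
      p (Sum.elim (fun z => if v z.1 then b z.1 z.2 else a z.1 z.2) c) =
        p (Sum.elim (fun z => if v z.1 then b z.1 z.2 else a z.1 z.2) d)) :
    p (Sum.elim (fun z => b z.1 z.2) c) = p (Sum.elim (fun z => b z.1 z.2) d) :=
  supernilpotent_of_cancellative_nilpotent_general n hcanc hpow k m p hp a b c d hyp
end

section
/- Let (S,+,o) be a commutative monoid satisfying the (n+1)-ary term condition with respect to equality for some n ≥ 1: for every polynomial p(x₁,…,xₙ,y̅) of (S,+,o) and elements a₁,…,aₙ,b₁,…,bₙ and tuples c,d, if p(v(x₁),…,v(xₙ),c) = p(v(x₁),…,v(xₙ),d) for all valuations v ∈ Πᵢ{aᵢ,bᵢ} except the all-b valuation, then p(b₁,…,bₙ,c) = p(b₁,…,bₙ,d). Then (S,+,o) is cancellative. -/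
/-- Polynomial functions of a commutative monoid `(S,+,0)`: generated from
projections and constants by pointwise `+`. -/
inductive IsAddPolyFn (S : Type*) [Add S] (ι : Type*) : ((ι → S) → S) → Prop
  | proj (i : ι) : IsAddPolyFn S ι (fun x => x i)
  | const (c : S) : IsAddPolyFn S ι (fun _ => c)
  | add {p q} : IsAddPolyFn S ι p → IsAddPolyFn S ι q → IsAddPolyFn S ι (fun x => p x + q x)

lemma isAddPolyFn_sum {S : Type*} [AddCommMonoid S] {ι κ : Type*} (s : Finset κ)
    (g : κ → ι) : IsAddPolyFn S ι (fun x => ∑ i ∈ s, x (g i)) := by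
  induction s using Finset.cons_induction with
  | empty => simpa using IsAddPolyFn.const (ι := ι) (0 : S)
  | cons j t hj ih =>
      simp only [Finset.sum_cons]
      exact IsAddPolyFn.add (IsAddPolyFn.proj (g j)) ih

lemma nsmul_add_cancel_aux {S : Type*} [AddCommMonoid S] {a c d : S}
    (hcd : a + c = a + d) : ∀ k : ℕ, (k + 1) • a + c = (k + 1) • a + d := by
  intro k
  induction k with
  | zero => simpa using hcd
  | succ m ih =>
      have : (m + 2) • a = (m + 1) • a + a := by rw [succ_nsmul]
      rw [this, add_assoc, add_assoc, hcd]

/-- A commutative monoid satisfying the `(n+1)`-ary term condition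
with respect to equality (`n ≥ 1`) is cancellative. -/
theorem cancellative_of_supernilpotent_monoid {S : Type*} [AddCommMonoid S]
    (n : ℕ) (hn : 1 ≤ n)
    (h : ∀ (m : ℕ) (p : ((Fin n ⊕ Fin m) → S) → S), IsAddPolyFn S (Fin n ⊕ Fin m) p →
      ∀ (a b : Fin n → S) (c d : Fin m → S),
        (∀ v : Fin n → Bool, v ≠ (fun _ => true) →
          p (Sum.elim (fun i => if v i then b i else a i) c) =
            p (Sum.elim (fun i => if v i then b i else a i) d)) →
        p (Sum.elim b c) = p (Sum.elim b d)) :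
    ∀ a c d : S, a + c = a + d → c = d := by
  intro a c d hacd
  -- polynomial p(x, y) = x₁ + ⋯ + xₙ + y₀
  set p : ((Fin n ⊕ Fin 1) → S) → S :=
    fun x => (∑ i : Fin n, x (Sum.inl i)) + x (Sum.inr 0) with hp
  have hpoly : IsAddPolyFn S (Fin n ⊕ Fin 1) p :=
    IsAddPolyFn.add (isAddPolyFn_sum Finset.univ Sum.inl) (IsAddPolyFn.proj (Sum.inr 0))
  have key := h 1 p hpoly (fun _ => a) (fun _ => 0) (fun _ => c) (fun _ => d) ?_
  · simpa [hp] using key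
  · intro v hv
    simp only [hp, Sum.elim_inl, Sum.elim_inr]
    -- the sum is k • a where k = number of indices with v i = false, and k ≥ 1
    have hsum : (∑ i : Fin n, if v i then (0 : S) else a)
        = (Finset.univ.filter (fun i => ¬ v i = true)).card • a := by
      rw [Finset.sum_ite, Finset.sum_const, Finset.sum_const, smul_zero, zero_add]
    obtain ⟨i, hi⟩ : ∃ i, v i = false := by
      by_contra hc
      push_neg at hc
      exact hv (funext fun i => by simpa using hc i)
    have hcard : 1 ≤ (Finset.univ.filter (fun i => ¬ v i = true)).card := by
      refine Finset.card_pos.mpr ⟨i, ?_⟩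
      simp [hi]
    obtain ⟨k, hk⟩ := Nat.exists_eq_add_of_le hcard
    rw [hsum, hk]
    have := nsmul_add_cancel_aux hacd k
    rwa [Nat.add_comm k 1] at this
end

section
/- Let S be a hemiring, n ≥ 2, 1 ≤ k < n, and p a polynomial which is a finite sum of monomials each depending on only the k variable-tuples x_{i₁},…,x_{i_k} (each monomial contains a variable from each of these tuples). For any tuples a₁,…,aₙ,b₁,…,bₙ: Σ over valuations with even number of b-choices of p^v equals Σ over valuations with odd number of b-choices of p^v. -/
lemma flip_card {n : ℕ} (j₀ : Fin n) (v : Fin n → Bool) :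
    (Finset.univ.filter (fun j => Function.update v j₀ (!v j₀) j = true)).card % 2
      = ((Finset.univ.filter (fun j => v j = true)).card + 1) % 2 := by
  cases hv : v j₀
  · have h1 : Finset.univ.filter (fun j => Function.update v j₀ (!false) j = true)
        = insert j₀ (Finset.univ.filter (fun j => v j = true)) := by
      ext j
      rcases eq_or_ne j j₀ with rfl | h
      · simp [hv]
      · simp [Function.update_apply, h]
    rw [h1, Finset.card_insert_of_notMem (by simp [hv])]
  · have hmem : j₀ ∈ Finset.univ.filter (fun j => v j = true) := by simp [hv]
    have h1 : Finset.univ.filter (fun j => Function.update v j₀ (!true) j = true)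
        = (Finset.univ.filter (fun j => v j = true)).erase j₀ := by
      ext j
      rcases eq_or_ne j j₀ with rfl | h
      · simp
      · simp [Function.update_apply, h]
    rw [h1, Finset.card_erase_of_mem hmem]
    have := Finset.card_pos.2 ⟨j₀, hmem⟩
    omega

/-- Let `p` be a polynomial over a hemiring which is a finite sum of
monomials (the `ℓ`-th monomial encoded by its list of factors `w ℓ`), each
depending only on the variable-tuples `x_j` for `j ∈ T` (`1 ≤ |T| = k < n`) and
containing at least one variable from each such tuple.  Then the sum of the values
of `p` over all valuations with an even number of `b`-assignments equals the sum
over those with an odd number. -/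
theorem polynomial_parity_sum {S : Type*} [NonUnitalSemiring S]
    (n : ℕ) (hn : 2 ≤ n)
    (K : Fin n → ℕ) (a b : ∀ j : Fin n, Fin (K j) → S)
    (T : Finset (Fin n)) (k : ℕ) (hk1 : 1 ≤ k) (hkn : k < n) (hT : T.card = k)
    (s : ℕ) (t : Fin (s + 1) → ℕ)
    (w : ∀ ℓ : Fin (s + 1), Fin (t ℓ + 1) → ((Σ j : Fin n, Fin (K j)) ⊕ S))
    (hdep : ∀ ℓ i z, w ℓ i = Sum.inl z → z.1 ∈ T)
    (hcontain : ∀ ℓ, ∀ j ∈ T, ∃ i z, w ℓ i = Sum.inl z ∧ z.1 = j) :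
    ∑ v ∈ Finset.univ.filter
        (fun v : Fin n → Bool => (Finset.univ.filter (fun j => v j = true)).card % 2 = 0),
      ∑ ℓ, finProd (fun i =>
        Sum.elim (fun z => if v z.1 then b z.1 z.2 else a z.1 z.2) id (w ℓ i)) =
    ∑ v ∈ Finset.univ.filter
        (fun v : Fin n → Bool => (Finset.univ.filter (fun j => v j = true)).card % 2 = 1),
      ∑ ℓ, finProd (fun i =>
        Sum.elim (fun z => if v z.1 then b z.1 z.2 else a z.1 z.2) id (w ℓ i)) := by
  obtain ⟨j₀, hj₀⟩ : ∃ j, j ∉ T := by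
    by_contra h
    push_neg at h
    have : T = Finset.univ := Finset.eq_univ_iff_forall.2 h
    rw [this] at hT
    simp [Finset.card_univ] at hT
    omega
  refine Finset.sum_nbij' (fun v => Function.update v j₀ (!v j₀))
    (fun v => Function.update v j₀ (!v j₀)) ?_ ?_ ?_ ?_ ?_
  · intro v hv
    simp only [Finset.mem_filter, Finset.mem_univ, true_and] at hv ⊢
    rw [flip_card]
    omega
  · intro v hv
    simp only [Finset.mem_filter, Finset.mem_univ, true_and] at hv ⊢
    rw [flip_card]
    omega
  · intro v _
    funext j
    rcases eq_or_ne j j₀ with rfl | h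
    · simp
    · simp [Function.update_apply, h]
  · intro v _
    funext j
    rcases eq_or_ne j j₀ with rfl | h
    · simp
    · simp [Function.update_apply, h]
  · intro v _
    refine Finset.sum_congr rfl fun ℓ _ => ?_
    congr 1
    funext i
    cases hw : w ℓ i with
    | inr x => simp
    | inl z =>
      have hz : z.1 ∈ T := hdep ℓ i z hw
      have hne : z.1 ≠ j₀ := fun h => hj₀ (h ▸ hz)
      simp [Function.update_apply, hne]
end

section
/- A semigroup with zero (S,·,o) satisfies S^{n+1} = {o} (every product of n+1 elements equals o) if and only if for every polynomial p(x₁,…,xₙ,y̅) of (S,·,o) and all elements a₁,…,aₙ,b₁,…,bₙ and tuples c,d: whenever p(v(x₁),…,v(xₙ),c) = p(v(x₁),…,v(xₙ),d) for all valuations v ∈ Πᵢ{aᵢ,bᵢ} except the all-b valuation, also p(b₁,…,bₙ,c) = p(b₁,…,bₙ,d). (n-supernilpotency of a semigroup with zero.) -/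
/-- Polynomial functions of a semigroup with zero `(S,·,0)`: generated from
projections and constants by pointwise `*`. -/
inductive IsMulPolyFn (S : Type*) [Mul S] (ι : Type*) : ((ι → S) → S) → Prop
  | proj (i : ι) : IsMulPolyFn S ι (fun x => x i)
  | const (c : S) : IsMulPolyFn S ι (fun _ => c)
  | mul {p q} : IsMulPolyFn S ι p → IsMulPolyFn S ι q → IsMulPolyFn S ι (fun x => p x * q x)

open Function

section finProd

variable {S : Type*} [MulZeroClass S]

theorem finProd_eq_zero_of_apply_eq_zero :
    ∀ {k : ℕ} (f : Fin (k + 1) → S) (j : Fin (k + 1)), f j = 0 → finProd f = 0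
  | 0, f, j, h => by rwa [Fin.fin_one_eq_zero j] at h
  | k + 1, f, j, h => by
    show f 0 * finProd (fun i => f i.succ) = 0
    rcases Fin.eq_zero_or_eq_succ j with rfl | ⟨i, rfl⟩
    · rw [h, zero_mul]
    · rw [finProd_eq_zero_of_apply_eq_zero _ i h, mul_zero]

theorem finProd_eq_zero_of_le_s12 {n : ℕ} (hS : ∀ f : Fin (n + 1) → S, finProd f = 0)
    {k : ℕ} (hk : n ≤ k) (f : Fin (k + 1) → S) : finProd f = 0 := by
  induction k, hk using Nat.le_induction with
  | base => exact hS f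
  | succ k _ ih =>
    show f 0 * finProd (fun i => f i.succ) = 0
    rw [ih, mul_zero]

end finProd

theorem card_le_length_of_injective {α β : Type*} [Fintype α] [DecidableEq β] {e : α → β}
    (he : Injective e) {l : List β} (hl : ∀ a, e a ∈ l) : Fintype.card α ≤ l.length :=
  calc Fintype.card α = (Finset.univ.map ⟨e, he⟩).card := by simp
    _ ≤ l.toFinset.card := Finset.card_le_card (by simp [Finset.subset_iff, hl])
    _ ≤ l.length := l.toFinset_card_le

namespace FreeSemigroup

variable {α β : Type*}

def toList (w : FreeSemigroup α) : List α := w.head :: w.tail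

@[simp] theorem toList_of (a : α) : (of a).toList = [a] := rfl

@[simp] theorem toList_mul (x y : FreeSemigroup α) : (x * y).toList = x.toList ++ y.toList := rfl

@[simp] theorem length_toList (w : FreeSemigroup α) : w.toList.length = w.length := rfl

variable [Semigroup β]

theorem lift_congr {f g : α → β} (w : FreeSemigroup α) (h : ∀ a ∈ w.toList, f a = g a) :
    lift f w = lift g w := by
  induction w with
  | ih1 a => simpa using h
  | ih2 a w _ ih =>
    simp only [toList_mul, toList_of, List.singleton_append, List.mem_cons] at h
    rw [lift_of_mul, lift_of_mul, h a (Or.inl rfl), ih fun b hb => h b (Or.inr hb)]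

theorem lift_mk_eq_finProd (f : α → β) (a : α) (l : List α) :
    lift f ⟨a, l⟩ = finProd (Fin.cons (f a) (fun i => f (l.get i)) : Fin (l.length + 1) → β) := by
  induction l generalizing a with
  | nil => rfl
  | cons b l ih =>
    refine (lift_of_mul f a ⟨b, l⟩).trans (congrArg (f a * ·) ((ih b).trans (congrArg _ ?_)))
    funext i
    cases i using Fin.cases <;> rfl

theorem lift_eq_zero_of_lt_length {S : Type*} [SemigroupWithZero S] {n : ℕ}
    (hS : ∀ f : Fin (n + 1) → S, finProd f = 0) (f : α → S) {w : FreeSemigroup α}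
    (hw : n < w.length) : lift f w = 0 := by
  rw [lift_mk_eq_finProd]
  exact finProd_eq_zero_of_le_s12 hS (Nat.le_of_lt_succ hw) _

end FreeSemigroup

/-- The term condition `C(1,…,1;0)`. -/
def IsSupernilpotent (S : Type*) [Mul S] (n : ℕ) : Prop :=
  ∀ (m : ℕ) (p : ((Fin n ⊕ Fin m) → S) → S), IsMulPolyFn S (Fin n ⊕ Fin m) p →
    ∀ (a b : Fin n → S) (c d : Fin m → S),
      (∀ v : Fin n → Bool, v ≠ (fun _ => true) →
        p (Sum.elim (fun i => if v i then b i else a i) c) =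
          p (Sum.elim (fun i => if v i then b i else a i) d)) →
      p (Sum.elim b c) = p (Sum.elim b d)

namespace IsMulPolyFn

variable {S ι : Type*}

theorem exists_eq_lift [Semigroup S] {p : (ι → S) → S} (hp : IsMulPolyFn S ι p) :
    ∃ w : FreeSemigroup (ι ⊕ S), ∀ x, p x = FreeSemigroup.lift (Sum.elim x id) w := by
  induction hp with
  | proj i => exact ⟨.of (.inl i), fun _ => rfl⟩
  | const c => exact ⟨.of (.inr c), fun _ => rfl⟩
  | mul _ _ ihp ihq =>
    obtain ⟨w₁, h₁⟩ := ihp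
    obtain ⟨w₂, h₂⟩ := ihq
    exact ⟨w₁ * w₂, fun x => by simp only [map_mul, h₁, h₂]⟩

theorem finProd [Mul S] : ∀ {k : ℕ} (e : Fin (k + 1) → ι),
    IsMulPolyFn S ι (fun x => _root_.finProd (fun i => x (e i)))
  | 0, e => proj (e 0)
  | _ + 1, e => mul (proj (e 0)) (finProd (fun i => e i.succ))

end IsMulPolyFn

open FreeSemigroup in
theorem isSupernilpotent_of_finProd_eq_zero {S : Type*} [SemigroupWithZero S] {n : ℕ}
    (hS : ∀ f : Fin (n + 1) → S, finProd f = 0) : IsSupernilpotent S n := by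
  classical
  intro m p hp a b c d hv
  obtain ⟨w, hw⟩ := hp.exists_eq_lift
  simp only [hw] at hv ⊢
  by_cases hx : ∃ j : Fin n, .inl (.inl j) ∉ w.toList
  · obtain ⟨j, hj⟩ := hx
    have hflip : ∀ e : Fin m → S,
        lift (Sum.elim (Sum.elim (fun i => if decide (i ≠ j) then b i else a i) e) id) w =
          lift (Sum.elim (Sum.elim b e) id) w := fun e => by
      refine lift_congr w ?_
      rintro ((i | k) | s) hi
      · simp [show i ≠ j by rintro rfl; exact hj hi]
      all_goals rfl
    rw [← hflip c, hv _ fun h => by simpa using congrFun h j, hflip d]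
  push Not at hx
  by_cases hy : ∃ k : Fin m, .inl (.inr k) ∈ w.toList
  · obtain ⟨k, hk⟩ := hy
    -- the word contains the `n + 1` distinct letters `x 0, …, x (n - 1), y k`
    have hlen : n < w.length := by
      have := card_le_length_of_injective (l := w.toList)
        (e := fun o : Option (Fin n) =>
          o.elim (Sum.inl (Sum.inr k) : (Fin n ⊕ Fin m) ⊕ S) (Sum.inl ∘ Sum.inl))
        (by rintro (_ | i) (_ | j) h <;> simp_all) (by rintro (_ | i); exacts [hk, hx i])
      rwa [Fintype.card_option, Fintype.card_fin] at this
    rw [lift_eq_zero_of_lt_length hS _ hlen, lift_eq_zero_of_lt_length hS _ hlen]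
  · push Not at hy
    refine lift_congr w ?_
    rintro ((i | k) | s) hi
    exacts [rfl, absurd hi (hy k), rfl]

theorem finProd_eq_zero_of_isSupernilpotent {S : Type*} [SemigroupWithZero S] {n : ℕ}
    (hS : IsSupernilpotent S n) (f : Fin (n + 1) → S) : finProd f = 0 := by
  have hp : IsMulPolyFn S (Fin n ⊕ Fin 1)
      (fun x => finProd (Fin.cons (x (.inr 0)) (fun i => x (.inl i)))) := by
    convert IsMulPolyFn.finProd (S := S) (Fin.cons (Sum.inr 0 : Fin n ⊕ Fin 1) Sum.inl)
      using 3 with x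
    exact (Fin.comp_cons x _ _).symm
  have := hS 1 _ hp 0 (Fin.tail f) (fun _ => f 0) 0 fun v hv => by
    obtain ⟨j, hj⟩ : ∃ j, v j = false := by simpa using ne_iff.mp hv
    simp only [Sum.elim_inr, Sum.elim_inl]
    rw [finProd_eq_zero_of_apply_eq_zero _ j.succ (by simp [hj]),
      finProd_eq_zero_of_apply_eq_zero _ j.succ (by simp [hj])]
  simpa [Fin.cons_self_tail, finProd_eq_zero_of_apply_eq_zero _ 0] using this

theorem semigroup_supernilpotent_iff_general {S : Type*} [SemigroupWithZero S]
    (n : ℕ) :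
    (∀ f : Fin (n + 1) → S, finProd f = 0) ↔
      (∀ (m : ℕ) (p : ((Fin n ⊕ Fin m) → S) → S), IsMulPolyFn S (Fin n ⊕ Fin m) p →
        ∀ (a b : Fin n → S) (c d : Fin m → S),
          (∀ v : Fin n → Bool, v ≠ (fun _ => true) →
            p (Sum.elim (fun i => if v i then b i else a i) c) =
              p (Sum.elim (fun i => if v i then b i else a i) d)) →
          p (Sum.elim b c) = p (Sum.elim b d)) :=
  ⟨isSupernilpotent_of_finProd_eq_zero, finProd_eq_zero_of_isSupernilpotent⟩

/-- A semigroup with zero satisfies `S^{n+1} = {0}` iff it satisfies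
the `(n+1)`-ary term condition `C(1,…,1;0)` (is `n`-supernilpotent), for `n ≥ 1`. -/
theorem semigroup_supernilpotent_iff {S : Type*} [SemigroupWithZero S]
    (n : ℕ) (hn : 1 ≤ n) :
    (∀ f : Fin (n + 1) → S, finProd f = 0) ↔
      (∀ (m : ℕ) (p : ((Fin n ⊕ Fin m) → S) → S), IsMulPolyFn S (Fin n ⊕ Fin m) p →
        ∀ (a b : Fin n → S) (c d : Fin m → S),
          (∀ v : Fin n → Bool, v ≠ (fun _ => true) →
            p (Sum.elim (fun i => if v i then b i else a i) c) =
              p (Sum.elim (fun i => if v i then b i else a i) d)) →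
          p (Sum.elim b c) = p (Sum.elim b d)) :=
  semigroup_supernilpotent_iff_general n
end

section
/- Let S be a hemiring that is abelian (satisfies the binary term condition with respect to equality: p(a,c̅) = p(a,d̅) implies p(b,c̅) = p(b,d̅) for every polynomial p). Then S is additively cancellative and x·y = o for all x, y ∈ S. -/
/-- An abelian hemiring (satisfying the binary term condition with
respect to equality) is additively cancellative and has zero multiplication. -/
theorem cancellative_zero_mul_of_abelian {S : Type*} [NonUnitalSemiring S]
    (habel : ∀ (m : ℕ) (p : (Fin (m + 1) → S) → S), IsPolyFn S (Fin (m + 1)) p →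
      ∀ (x y : S) (c d : Fin m → S),
        p (Fin.cons x c) = p (Fin.cons x d) → p (Fin.cons y c) = p (Fin.cons y d)) :
    (∀ a c d : S, a + c = a + d → c = d) ∧ (∀ x y : S, x * y = 0) := by
  constructor
  · intro a c d h
    have := habel 1 (fun v => v 0 + v 1) (IsPolyFn.add (IsPolyFn.proj 0) (IsPolyFn.proj 1))
      a 0 ![c] ![d]
    simpa using this (by simpa using h)
  · intro x y
    have := habel 1 (fun v => v 0 * v 1) (IsPolyFn.mul (IsPolyFn.proj 0) (IsPolyFn.proj 1))
      0 x ![y] ![0]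
    simpa using this (by simp)
end

section
/- A finite hemiring S is abelian (satisfies the binary term condition with respect to equality) if and only if (S,+,o) is an abelian group and x·y = o for all x,y (i.e., S is a zero-ring). -/
private lemma cancel_of_inv {S : Type*} [AddCommMonoid S]
    (h : ∀ a : S, ∃ b : S, a + b = 0) (a c d : S) (hcd : a + c = a + d) : c = d := by
  obtain ⟨b, hb⟩ := h a
  calc c = (b + a) + c := by rw [add_comm b a, hb, zero_add]
    _ = b + (a + c) := by rw [add_assoc]
    _ = b + (a + d) := by rw [hcd]
    _ = (b + a) + d := by rw [add_assoc]
    _ = d := by rw [add_comm b a, hb, zero_add]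

private lemma poly_repr {S : Type*} [NonUnitalSemiring S] {m : ℕ}
    (hz : ∀ x y : S, x * y = 0) (p : (Fin m → S) → S) (hp : IsPolyFn S (Fin m) p) :
    ∃ (n : Fin m → ℕ) (k : S), ∀ v, p v = (∑ i, n i • v i) + k := by
  induction hp with
  | proj i =>
    refine ⟨Pi.single i 1, 0, fun v => ?_⟩
    simp [Pi.single_apply, ite_smul]
  | const c => exact ⟨0, c, fun v => by simp⟩
  | add hp hq ihp ihq =>
    obtain ⟨n1, k1, h1⟩ := ihp
    obtain ⟨n2, k2, h2⟩ := ihq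
    refine ⟨n1 + n2, k1 + k2, fun v => ?_⟩
    show _ + _ = _
    rw [h1, h2]
    simp only [Pi.add_apply, add_smul, Finset.sum_add_distrib]
    abel
  | mul hp hq ihp ihq =>
    exact ⟨0, 0, fun v => by simp [hz]⟩

/-- A finite hemiring is abelian iff its additive monoid is a group
and its multiplication is the zero multiplication (i.e. it is a zero-ring). -/
theorem finite_abelian_iff_zero_ring {S : Type*} [NonUnitalSemiring S] [Fintype S] :
    (∀ (m : ℕ) (p : (Fin (m + 1) → S) → S), IsPolyFn S (Fin (m + 1)) p →
      ∀ (x y : S) (c d : Fin m → S),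
        p (Fin.cons x c) = p (Fin.cons x d) → p (Fin.cons y c) = p (Fin.cons y d)) ↔
      ((∀ a : S, ∃ b : S, a + b = 0) ∧ (∀ x y : S, x * y = 0)) := by
  constructor
  · intro H
    have hadd : ∀ a c d : S, a + c = a + d → c = d := by
      intro a c d h
      have := H 1 (fun v => v 0 + v 1) (IsPolyFn.add (IsPolyFn.proj 0) (IsPolyFn.proj 1))
        a 0 (fun _ => c) (fun _ => d)
      simp only [Fin.cons_zero, Fin.cons_one, zero_add] at this
      exact this h
    constructor
    · intro a
      have hinj : Function.Injective (fun b : S => a + b) := fun c d h => hadd a c d h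
      obtain ⟨b, hb⟩ := Finite.injective_iff_surjective.mp hinj 0
      exact ⟨b, hb⟩
    · intro x y
      have := H 1 (fun v => v 0 * v 1) (IsPolyFn.mul (IsPolyFn.proj 0) (IsPolyFn.proj 1))
        0 x (fun _ => y) (fun _ => 0)
      simp only [Fin.cons_zero, Fin.cons_one, zero_mul, mul_zero] at this
      exact this trivial
  · rintro ⟨hg, hz⟩ m p hp x y c d heq
    obtain ⟨n, k, hr⟩ := poly_repr hz p hp
    rw [hr, hr] at heq ⊢
    simp only [Fin.sum_univ_succ, Fin.cons_zero, Fin.cons_succ] at heq ⊢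
    rw [add_assoc, add_assoc] at heq ⊢
    rw [cancel_of_inv hg _ _ _ heq]
end
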